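/- arXiv:0911.5238 — 2 statements merged into one kernel-verified Lean document; each statement's English description precedes it below -/
import Mathlib

section
/- Let G be a profinite set (a compact, Hausdorff, totally disconnected topological space). The contravariant functor from the category of simplicial objects in profinite spaces to sets, sending a simplicial profinite set X to the set of continuous maps from its space X₀ of 0-simplices to G, is representable; i.e. there exists a simplicial profinite set EG together with a natural bijection Hom(X, EG) ≅ C(X₀, G). -/
open CategoryTheory Opposite Simplicial

attribute [local instance] CategoryTheory.ConcreteCategory.instFunLike

/-!
A morphism `X ⟶ EG` into the simplicial profinite set with `EG_n = G^{n+1}` is determined by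
its degree-`0` component: naturality with respect to the vertex maps `⦋0⦌ ⟶ ⦋n⦌` forces the
`i`-th coordinate of an `n`-simplex to be the image of its `i`-th vertex. Conversely, any
continuous `f : X₀ → G` defines such a morphism by sending an `n`-simplex to the tuple of the
values of `f` at its vertices.
-/

namespace CategoryTheory.SimplicialObject

variable {C : Type*} [Category C] (X : SimplicialObject C)

def vertex (n : SimplexCategory) (i : Fin (n.len + 1)) : X.obj (op n) ⟶ X.obj (op ⦋0⦌) :=
  X.map (SimplexCategory.const ⦋0⦌ n i).op

lemma map_vertex {n m : SimplexCategory} (θ : n ⟶ m) (i : Fin (n.len + 1)) :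
    X.map θ.op ≫ X.vertex n i = X.vertex m (θ.toOrderHom i) := by
  simp only [vertex, ← X.map_comp, ← op_comp, SimplexCategory.const_comp]

lemma vertex_zero : X.vertex ⦋0⦌ 0 = 𝟙 _ := by
  simp only [vertex, SimplexCategory.const_eq_id, op_id, X.map_id]

end CategoryTheory.SimplicialObject

namespace Profinite

variable (G : Profinite.{u})

/-- The paper's `EG`. -/
def simplicialEG : SimplicialObject Profinite.{u} where
  obj n := Profinite.of (Fin ((unop n).len + 1) → G)
  map θ := ConcreteCategory.ofHom ⟨fun g i => g (θ.unop.toOrderHom i), by fun_prop⟩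
  map_id _ := rfl
  map_comp _ _ := rfl

variable {G} {X : SimplicialObject Profinite.{u}}

def toSimplicialEG (f : {f : X.obj (op ⦋0⦌) → G // Continuous f}) : X ⟶ simplicialEG G where
  app n := ConcreteCategory.ofHom
    ⟨fun x i => f.1 (SimplicialObject.vertex X (unop n) i x),
      continuous_pi fun i =>
        f.2.comp (ConcreteCategory.hom (SimplicialObject.vertex X (unop n) i)).continuous⟩
  naturality n m θ := by
    ext x
    funext i
    exact congrArg f.1 (ConcreteCategory.congr_hom (SimplicialObject.map_vertex X θ.unop i) x)

lemma app_apply_eq_app_zero_vertex (η : X ⟶ simplicialEG G) (n : SimplexCategoryᵒᵖ)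
    (x : X.obj n) (i : Fin ((unop n).len + 1)) :
    η.app n x i = η.app (op ⦋0⦌) (SimplicialObject.vertex X (unop n) i x) 0 :=
  (congrFun (ConcreteCategory.congr_hom
    (η.naturality (SimplexCategory.const ⦋0⦌ (unop n) i).op) x) 0).symm

def homSimplicialEGEquiv (X : SimplicialObject Profinite.{u}) :
    (X ⟶ simplicialEG G) ≃ {f : X.obj (op ⦋0⦌) → G // Continuous f} where
  toFun η := ⟨fun x => η.app (op ⦋0⦌) x 0,
    (continuous_apply 0).comp (ConcreteCategory.hom (η.app (op ⦋0⦌))).continuous⟩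
  invFun := toSimplicialEG
  left_inv η := by
    ext n x
    funext i
    exact (app_apply_eq_app_zero_vertex η n x i).symm
  right_inv f := by
    ext x
    exact congrArg f.1 (ConcreteCategory.congr_hom (SimplicialObject.vertex_zero X) x)

end Profinite

/-- For a profinite set `G`, the functor sending a simplicial profinite set
`X` to the set of continuous maps `X₀ → G` is representable by a simplicial profinite
set `EG`. -/
theorem stmt_5 (G : Profinite.{u}) :
    ∃ (EG : SimplicialObject Profinite.{u})
      (e : ∀ X : SimplicialObject Profinite.{u},
        (X ⟶ EG) ≃
          {f : X.obj (op (SimplexCategory.mk 0)) → G // Continuous f}),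
      ∀ (X Y : SimplicialObject Profinite.{u}) (φ : X ⟶ Y) (g : Y ⟶ EG),
        ((e X (φ ≫ g)).1 : X.obj (op (SimplexCategory.mk 0)) → G) =
          fun x => (e Y g).1 (φ.app (op (SimplexCategory.mk 0)) x) :=
  ⟨Profinite.simplicialEG G, Profinite.homSimplicialEGEquiv, fun _ _ _ _ => rfl⟩
end

section
/- Let G be a profinite group (a topological group that is compact, Hausdorff, and totally disconnected). For a simplicial profinite set X, let Z¹(X;G) = { continuous f : X₁ → G | f(d₀x)·f(d₂x) = f(d₁x) for all x ∈ X₂ }, where d₀, d₁, d₂ : X₂ → X₁ are the face maps of X. The contravariant functor X ↦ Z¹(X;G) from simplicial profinite sets to sets is representable; i.e. there exists a simplicial profinite set BG with a natural bijection Hom(X, BG) ≅ Z¹(X;G). -/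
open CategoryTheory Opposite
attribute [local instance] CategoryTheory.ConcreteCategory.instFunLike
set_option linter.unusedSectionVars false
universe u

namespace Stmt6
variable (G : Type u) [Group G] [TopologicalSpace G] [IsTopologicalGroup G]
  [CompactSpace G] [T2Space G] [TotallyDisconnectedSpace G]

def Coc (n : ℕ) : Type u :=
  {g : Fin (n+1) → Fin (n+1) → G // ∀ i j k, g j k * g i j = g i k}

instance (n : ℕ) : TopologicalSpace (Coc G n) := by unfold Coc; infer_instance
instance (n : ℕ) : T2Space (Coc G n) := by unfold Coc; infer_instance
instance (n : ℕ) : TotallyDisconnectedSpace (Coc G n) := by unfold Coc; infer_instance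

instance (n : ℕ) : CompactSpace (Coc G n) := by
  have h : IsClosed {g : Fin (n+1) → Fin (n+1) → G | ∀ i j k, g j k * g i j = g i k} := by
    simp only [Set.setOf_forall]
    refine isClosed_iInter fun i => isClosed_iInter fun j => isClosed_iInter fun k => ?_
    exact isClosed_eq (by fun_prop) (by fun_prop)
  exact (show CompactSpace ↥{g : Fin (n+1) → Fin (n+1) → G | ∀ i j k, g j k * g i j = g i k}
    from isCompact_iff_compactSpace.mp h.isCompact)

lemma Coc.continuous_eval {n : ℕ} (i j : Fin (n+1)) :
    Continuous fun g : Coc G n => g.1 i j :=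
  ((continuous_apply_apply (ρ := fun _ _ => G) i j).comp continuous_subtype_val :)

def BG : SimplicialObject Profinite.{u} where
  obj n := Profinite.of (Coc G n.unop.len)
  map {n m} α := CompHausLike.ofHom _ ⟨fun g => ⟨fun i j => g.1 (α.unop.toOrderHom i) (α.unop.toOrderHom j),
      fun i j k => g.2 _ _ _⟩, by
    refine Continuous.subtype_mk ?_ _
    exact continuous_pi fun i => continuous_pi fun j => Coc.continuous_eval G _ _⟩
  map_id n := rfl
  map_comp f g := rfl

/-- the edge from `a` to `b`. -/
abbrev edge {n : SimplexCategory} (a b : Fin (n.len + 1)) (h : a ≤ b) :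
    SimplexCategory.mk 1 ⟶ n :=
  SimplexCategory.mkOfLe a b h

abbrev tri {n : SimplexCategory} (a b c : Fin (n.len + 1)) (h1 : a ≤ b) (h2 : b ≤ c) :
    SimplexCategory.mk 2 ⟶ n :=
  SimplexCategory.mkOfLeComp a b c h1 h2

lemma δ0_tri {n : SimplexCategory} (a b c : Fin (n.len + 1)) (h1 : a ≤ b) (h2 : b ≤ c) :
    SimplexCategory.δ (0 : Fin 3) ≫ tri a b c h1 h2 = edge b c h2 := by
  apply SimplexCategory.Hom.ext'; apply OrderHom.ext; funext x
  fin_cases x <;> rfl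

lemma δ1_tri {n : SimplexCategory} (a b c : Fin (n.len + 1)) (h1 : a ≤ b) (h2 : b ≤ c) :
    SimplexCategory.δ (1 : Fin 3) ≫ tri a b c h1 h2 = edge a c (h1.trans h2) := by
  apply SimplexCategory.Hom.ext'; apply OrderHom.ext; funext x
  fin_cases x <;> rfl

lemma δ2_tri {n : SimplexCategory} (a b c : Fin (n.len + 1)) (h1 : a ≤ b) (h2 : b ≤ c) :
    SimplexCategory.δ (2 : Fin 3) ≫ tri a b c h1 h2 = edge a b h1 := by
  apply SimplexCategory.Hom.ext'; apply OrderHom.ext; funext x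
  fin_cases x <;> rfl

lemma edge_comp {n m : SimplexCategory} (a b : Fin (n.len + 1)) (h : a ≤ b) (β : n ⟶ m) :
    edge a b h ≫ β = edge (β.toOrderHom a) (β.toOrderHom b) (β.toOrderHom.monotone h) := by
  apply SimplexCategory.Hom.ext'; apply OrderHom.ext; funext x
  fin_cases x <;> rfl

lemma edge_zero_one : edge (n := SimplexCategory.mk 1) 0 1 (by decide) = 𝟙 _ := by
  apply SimplexCategory.Hom.ext'; apply OrderHom.ext; funext x
  fin_cases x <;> rfl

section
variable {G}
variable (X : SimplicialObject Profinite.{u})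

lemma natural_pt {Y : SimplicialObject Profinite.{u}} (φ : X ⟶ Y) {m m' : SimplexCategoryᵒᵖ}
    (α : m ⟶ m') (x : X.obj m) :
    φ.app m' (X.map α x) = Y.map α (φ.app m x) := by
  have h := φ.naturality α
  calc φ.app m' (X.map α x) = (X.map α ≫ φ.app m') x := rfl
  _ = (φ.app m ≫ Y.map α) x := by rw [h]
  _ = _ := rfl

variable (f : X.obj (op (SimplexCategory.mk 1)) → G)
  (hc : Continuous f)
  (hf : ∀ x : X.obj (op (SimplexCategory.mk 2)),
    f (X.δ (0 : Fin 3) x) * f (X.δ (2 : Fin 3) x) = f (X.δ (1 : Fin 3) x))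

include hf in
lemma key {m : SimplexCategoryᵒᵖ} (x : X.obj m) (a b c : Fin (m.unop.len + 1))
    (h1 : a ≤ b) (h2 : b ≤ c) :
    f (X.map (edge b c h2).op x) * f (X.map (edge a b h1).op x) =
      f (X.map (edge a c (h1.trans h2)).op x) := by
  have := hf (X.map (tri a b c h1 h2).op x)
  simp only [SimplicialObject.δ] at this
  rw [← comp_apply, ← comp_apply, ← comp_apply, ← X.map_comp, ← X.map_comp, ← X.map_comp,
    ← op_comp, ← op_comp, ← op_comp, δ0_tri, δ1_tri, δ2_tri] at this
  exact this

include hf in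
lemma edge_eq {m : SimplexCategoryᵒᵖ} (x : X.obj m) (a b : Fin (m.unop.len + 1)) (h : a ≤ b) :
    f (X.map (edge a b h).op x) =
      f (X.map (edge 0 b (Fin.zero_le _)).op x) *
        (f (X.map (edge 0 a (Fin.zero_le _)).op x))⁻¹ :=
  eq_mul_inv_of_mul_eq (key X f hf x 0 a b (Fin.zero_le _) h)

include hf in
lemma edge_self {m : SimplexCategoryᵒᵖ} (x : X.obj m) (a : Fin (m.unop.len + 1)) :
    f (X.map (edge a a le_rfl).op x) = 1 :=
  mul_eq_right.mp (key X f hf x a a a le_rfl le_rfl)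

/-- the natural transformation attached to a cocycle. -/
def toBG : X ⟶ BG G where
  app m := CompHausLike.ofHom _ ⟨fun x => ⟨fun i j =>
      f (X.map (edge 0 j (Fin.zero_le _)).op x) *
        (f (X.map (edge 0 i (Fin.zero_le _)).op x))⁻¹,
      fun i j k => by group⟩, by
    refine Continuous.subtype_mk ?_ _
    refine continuous_pi fun i => continuous_pi fun j => ?_
    exact ((hc.comp (ConcreteCategory.hom (X.map _)).continuous).mul ((hc.comp (ConcreteCategory.hom (X.map _)).continuous).inv))⟩
  naturality {m m'} α := by
    ext x
    refine Subtype.ext (funext fun i => funext fun j => ?_)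
    show f (X.map (edge 0 j (Fin.zero_le _)).op (X.map α x)) *
        (f (X.map (edge 0 i (Fin.zero_le _)).op (X.map α x)))⁻¹ = _
    rw [← comp_apply, ← comp_apply, ← X.map_comp, ← X.map_comp, ← α.op_unop, ← op_comp,
      ← op_comp, edge_comp, edge_comp,
      edge_eq X f hf x (α.unop.toOrderHom 0) (α.unop.toOrderHom j)
        (α.unop.toOrderHom.monotone (Fin.zero_le j)),
      edge_eq X f hf x (α.unop.toOrderHom 0) (α.unop.toOrderHom i)
        (α.unop.toOrderHom.monotone (Fin.zero_le i))]
    show _ = f (X.map (edge 0 (α.unop.toOrderHom j) (Fin.zero_le _)).op x) *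
        (f (X.map (edge 0 (α.unop.toOrderHom i) (Fin.zero_le _)).op x))⁻¹
    group

/-- the cocycle attached to a natural transformation to `BG`. -/
def Zf (φ : X ⟶ BG G) : X.obj (op (SimplexCategory.mk 1)) → G :=
  fun x => (φ.app (op (SimplexCategory.mk 1)) x).1 0 1

lemma Zf_continuous (φ : X ⟶ BG G) : Continuous (Zf X φ) :=
  (Coc.continuous_eval G (0 : Fin 2) (1 : Fin 2)).comp
    (ConcreteCategory.hom (φ.app (op (SimplexCategory.mk 1)))).continuous

lemma Zf_cocycle (φ : X ⟶ BG G) (x : X.obj (op (SimplexCategory.mk 2))) :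
    Zf X φ (X.δ (0 : Fin 3) x) * Zf X φ (X.δ (2 : Fin 3) x) = Zf X φ (X.δ (1 : Fin 3) x) := by
  have h0 := natural_pt X φ (SimplexCategory.δ (0 : Fin 3)).op x
  have h1 := natural_pt X φ (SimplexCategory.δ (1 : Fin 3)).op x
  have h2 := natural_pt X φ (SimplexCategory.δ (2 : Fin 3)).op x
  simp only [Zf, SimplicialObject.δ, h0, h1, h2]
  exact (φ.app (op (SimplexCategory.mk 2)) x).2 0 1 2

include hf in
lemma Zf_toBG : Zf X (toBG X f hc hf) = f := by
  funext x
  show f (X.map (edge 0 1 (by decide)).op x) * (f (X.map (edge 0 0 le_rfl).op x))⁻¹ = f x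
  rw [edge_self X f hf (m := op (SimplexCategory.mk 1)) x 0, edge_zero_one]
  simp

lemma toBG_Zf (φ : X ⟶ BG G) :
    toBG X (Zf X φ) (Zf_continuous X φ) (Zf_cocycle X φ) = φ := by
  apply NatTrans.ext; funext m
  apply ConcreteCategory.hom_ext; intro x
  refine Subtype.ext (funext fun i => funext fun j => ?_)
  show Zf X φ (X.map (edge 0 j (Fin.zero_le _)).op x) *
      (Zf X φ (X.map (edge 0 i (Fin.zero_le _)).op x))⁻¹ = (φ.app m x).1 i j
  simp only [Zf, natural_pt X φ]
  exact (eq_mul_inv_of_mul_eq ((φ.app m x).2 0 i j)).symm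

end
end Stmt6

/-- For a profinite group `G`, the functor sending a simplicial profinite
set `X` to the set `Z¹(X;G)` of continuous `1`-cocycles, i.e. continuous maps
`f : X₁ → G` with `f(d₀x)·f(d₂x) = f(d₁x)` for all `x ∈ X₂`, is representable by a
simplicial profinite set `BG`. -/
theorem stmt_6 (G : Type u) [Group G] [TopologicalSpace G] [IsTopologicalGroup G]
    [CompactSpace G] [T2Space G] [TotallyDisconnectedSpace G] :
    ∃ (BG : SimplicialObject Profinite.{u})
      (e : ∀ X : SimplicialObject Profinite.{u},
        (X ⟶ BG) ≃
          {f : X.obj (op (SimplexCategory.mk 1)) → G //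
            Continuous f ∧
              ∀ x : X.obj (op (SimplexCategory.mk 2)),
                f (X.δ (0 : Fin 3) x) * f (X.δ (2 : Fin 3) x) = f (X.δ (1 : Fin 3) x)}),
      ∀ (X Y : SimplicialObject Profinite.{u}) (φ : X ⟶ Y) (g : Y ⟶ BG),
        ((e X (φ ≫ g)).1 : X.obj (op (SimplexCategory.mk 1)) → G) =
          fun x => (e Y g).1 (φ.app (op (SimplexCategory.mk 1)) x) := by
  refine ⟨Stmt6.BG G, fun X =>
    { toFun := fun φ => ⟨Stmt6.Zf X φ, Stmt6.Zf_continuous X φ, Stmt6.Zf_cocycle X φ⟩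
      invFun := fun f => Stmt6.toBG X f.1 f.2.1 f.2.2
      left_inv := fun φ => Stmt6.toBG_Zf X φ
      right_inv := fun f => Subtype.ext (Stmt6.Zf_toBG X f.1 f.2.1 f.2.2) }, ?_⟩
  intro X Y φ g
  rfl
end
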